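/- Let q ∈ [1, 2], p its Hölder conjugate (1/p + 1/q = 1), and let w, w* ∈ ℝ^d with ‖w‖_q = ‖w*‖_q = 1, ‖w‖_2 < ‖w*‖_2, and angle θ = ∠(w, w*). Define w' = w·‖w*‖_2/‖w‖_2. Then ‖w'‖_q ≤ 1 + ‖w*‖_2·θ·d^{1/q − 1/2}, and consequently ‖w‖_2 ≥ ‖w*‖_2/(1 + ‖w*‖_2·θ·d^{1/q − 1/2}). -/

import Mathlib

/-! Rescaling `w` does not change its direction, so `w'` still makes the angle `θ` with `w*`, and
now `‖w'‖₂ = ‖w*‖₂`. Hence `w' - w*` is a chord of the circle of radius `‖w*‖₂` subtending `θ`,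
no longer than the arc `‖w*‖₂ θ`. The triangle inequality in `ℓ_q` and the Hölder bound
`‖z‖_q ≤ d^(1/q - 1/2) ‖z‖₂` give the first inequality; since `‖w'‖_q = ‖w*‖₂ / ‖w‖₂`, the
second is the first one rearranged. -/

open scoped ENNReal BigOperators
open MeasureTheory

noncomputable def lpNorm (p : ℝ≥0∞) {d : ℕ} (v : Fin d → ℝ) : ℝ :=
  if p = ∞ then ⨆ i, |v i| else (∑ i, |v i| ^ p.toReal) ^ (1 / p.toReal)

def dot {d : ℕ} (v x : Fin d → ℝ) : ℝ := ∑ i, v i * x i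

open InnerProductGeometry WithLp

theorem norm_toLp_le_card_rpow_mul_norm_toLp {ι : Type*} [Fintype ι] {β : ι → Type*}
    [∀ i, SeminormedAddCommGroup (β i)] {p r : ℝ≥0∞} (hp : 0 < p.toReal) (hpr : p ≤ r) (hr : r ≠ ∞)
    (f : ∀ i, β i) :
    ‖toLp p f‖ ≤ (Fintype.card ι : ℝ) ^ (1 / p.toReal - 1 / r.toReal) * ‖toLp r f‖ := by
  have hpr' : p.toReal ≤ r.toReal := ENNReal.toReal_mono hr hpr
  have hs : 1 ≤ r.toReal / p.toReal := (one_le_div hp).2 hpr'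
  have holder := Real.inner_le_weight_mul_Lp_of_nonneg Finset.univ hs (fun _ ↦ 1)
    (fun i ↦ ‖f i‖ ^ p.toReal) (fun _ ↦ zero_le_one) (fun _ ↦ by positivity)
  have hpow : ∀ i, (‖f i‖ ^ p.toReal) ^ (r.toReal / p.toReal) = ‖f i‖ ^ r.toReal := fun i ↦ by
    rw [← Real.rpow_mul (norm_nonneg _), mul_div_cancel₀ _ hp.ne']
  simp only [one_mul, hpow, Finset.sum_const, Finset.card_univ, nsmul_eq_mul, mul_one,
    inv_div] at holder
  rw [PiLp.norm_eq_sum hp, PiLp.norm_eq_sum (hp.trans_le hpr')]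
  calc (∑ i, ‖f i‖ ^ p.toReal) ^ (1 / p.toReal)
      ≤ ((Fintype.card ι : ℝ) ^ (1 - p.toReal / r.toReal) *
          (∑ i, ‖f i‖ ^ r.toReal) ^ (p.toReal / r.toReal)) ^ (1 / p.toReal) := by
        gcongr
    _ = _ := by
        rw [Real.mul_rpow (by positivity) (by positivity), ← Real.rpow_mul (by positivity),
          ← Real.rpow_mul (by positivity)]
        congr 2 <;> field_simp

theorem InnerProductGeometry.norm_sub_le_norm_mul_angle {V : Type*} [NormedAddCommGroup V]
    [InnerProductSpace ℝ V] {x y : V} (h : ‖x‖ = ‖y‖) : ‖x - y‖ ≤ ‖y‖ * angle x y := by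
  have hcos := Real.one_sub_sq_div_two_le_cos (x := angle x y)
  have hsq : ‖x - y‖ ^ 2 ≤ (‖y‖ * angle x y) ^ 2 := by
    rw [sq, norm_sub_sq_eq_norm_sq_add_norm_sq_sub_two_mul_norm_mul_norm_mul_cos_angle, h]
    nlinarith [sq_nonneg ‖y‖]
  exact (pow_le_pow_iff_left₀ (norm_nonneg _) (by positivity [angle_nonneg x y]) two_ne_zero).1 hsq

theorem lpNorm_eq_norm_toLp {p : ℝ≥0∞} (hp : p ≠ 0) {d : ℕ} (v : Fin d → ℝ) :
    lpNorm p v = ‖toLp p v‖ := by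
  rcases eq_or_ne p ∞ with rfl | hp'
  · simp [_root_.lpNorm, PiLp.norm_eq_ciSup]
  · simp [_root_.lpNorm, PiLp.norm_eq_sum (ENNReal.toReal_pos hp hp'), hp']

theorem dot_eq_inner {d : ℕ} (v x : Fin d → ℝ) : dot v x = inner ℝ (toLp 2 v) (toLp 2 x) := by
  simp [dot, EuclideanSpace.inner_toLp_toLp, dotProduct, mul_comm]

theorem lpNorm_smul {p : ℝ≥0∞} (hp : 1 ≤ p) {d : ℕ} (c : ℝ) (v : Fin d → ℝ) :
    lpNorm p (c • v) = |c| * lpNorm p v := by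
  have : Fact (1 ≤ p) := ⟨hp⟩
  have hp0 : p ≠ 0 := (zero_lt_one.trans_le hp).ne'
  rw [lpNorm_eq_norm_toLp hp0, lpNorm_eq_norm_toLp hp0, toLp_smul, norm_smul, Real.norm_eq_abs]

theorem lpNorm_pos_iff {p : ℝ≥0∞} (hp : 1 ≤ p) {d : ℕ} {v : Fin d → ℝ} :
    0 < lpNorm p v ↔ v ≠ 0 := by
  have : Fact (1 ≤ p) := ⟨hp⟩
  rw [lpNorm_eq_norm_toLp (zero_lt_one.trans_le hp).ne', norm_pos_iff, ne_eq, toLp_eq_zero]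

theorem lpNorm_le_add_mul_angle {d : ℕ} {q : ℝ≥0∞} (hq1 : 1 ≤ q) (hq2 : q ≤ 2)
    {x y : Fin d → ℝ} (h : lpNorm 2 x = lpNorm 2 y) :
    lpNorm q x ≤ lpNorm q y +
      lpNorm 2 y * angle (toLp 2 x) (toLp 2 y) * (d : ℝ) ^ (1 / q.toReal - 1 / 2) := by
  have : Fact (1 ≤ q) := ⟨hq1⟩
  have hq0 : 0 < q.toReal := ENNReal.toReal_pos (zero_lt_one.trans_le hq1).ne'
    (ne_top_of_le_ne_top ENNReal.ofNat_ne_top hq2)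
  simp only [lpNorm_eq_norm_toLp (zero_lt_one.trans_le hq1).ne',
    lpNorm_eq_norm_toLp two_ne_zero] at h ⊢
  have hcmp := norm_toLp_le_card_rpow_mul_norm_toLp hq0 hq2 ENNReal.ofNat_ne_top (x - y)
  rw [Fintype.card_fin, ENNReal.toReal_ofNat, toLp_sub, toLp_sub] at hcmp
  calc ‖toLp q x‖ ≤ ‖toLp q y‖ + ‖toLp q x - toLp q y‖ := norm_le_insert' _ _
    _ ≤ ‖toLp q y‖ + (d : ℝ) ^ (1 / q.toReal - 1 / 2) * ‖toLp 2 x - toLp 2 y‖ := by gcongr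
    _ ≤ ‖toLp q y‖ + (d : ℝ) ^ (1 / q.toReal - 1 / 2) *
          (‖toLp 2 y‖ * angle (toLp 2 x) (toLp 2 y)) := by
        gcongr
        exact norm_sub_le_norm_mul_angle h
    _ = _ := by ring

theorem stmt_15_general {d : ℕ} (q : ℝ≥0∞) (hq1 : 1 ≤ q) (hq2 : q ≤ 2)
    (w wstar : Fin d → ℝ) (hwq : lpNorm q w = 1) (hwsq : lpNorm q wstar = 1)
    (θ : ℝ) (hθ : θ = Real.arccos (dot w wstar / (lpNorm 2 w * lpNorm 2 wstar)))
    (w' : Fin d → ℝ) (hw' : w' = (lpNorm 2 wstar / lpNorm 2 w) • w) :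
    lpNorm q w' ≤ 1 + lpNorm 2 wstar * θ * (d : ℝ) ^ (1 / q.toReal - 1 / 2) ∧
    lpNorm 2 wstar / (1 + lpNorm 2 wstar * θ * (d : ℝ) ^ (1 / q.toReal - 1 / 2))
      ≤ lpNorm 2 w := by
  have hw : 0 < lpNorm 2 w :=
    (lpNorm_pos_iff one_le_two).2 ((lpNorm_pos_iff hq1).1 (by simp [hwq]))
  have hc : 0 < lpNorm 2 wstar / lpNorm 2 w :=
    div_pos ((lpNorm_pos_iff one_le_two).2 ((lpNorm_pos_iff hq1).1 (by simp [hwsq]))) hw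
  have hw'2 : lpNorm 2 w' = lpNorm 2 wstar := by
    rw [hw', lpNorm_smul one_le_two, abs_of_pos hc, div_mul_cancel₀ _ hw.ne']
  have hangle : angle (toLp 2 w') (toLp 2 wstar) = θ := by
    rw [hθ, hw', toLp_smul, angle_smul_left_of_pos _ _ hc, angle, dot_eq_inner,
      lpNorm_eq_norm_toLp two_ne_zero, lpNorm_eq_norm_toLp two_ne_zero]
  have hbound := lpNorm_le_add_mul_angle hq1 hq2 hw'2
  rw [hwsq, hangle] at hbound
  refine ⟨hbound, ?_⟩
  rw [hw', lpNorm_smul hq1, hwq, abs_of_pos hc, mul_one] at hbound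
  rwa [div_le_comm₀ (hc.trans_le hbound) hw]

theorem stmt_15 {d : ℕ} (p q : ℝ≥0∞) (hq1 : 1 ≤ q) (hq2 : q ≤ 2)
    (hpq : 1 / p + 1 / q = 1)
    (w wstar : Fin d → ℝ) (hwq : lpNorm q w = 1) (hwsq : lpNorm q wstar = 1)
    (hnorm : lpNorm 2 w < lpNorm 2 wstar)
    (θ : ℝ) (hθ : θ = Real.arccos (dot w wstar / (lpNorm 2 w * lpNorm 2 wstar)))
    (w' : Fin d → ℝ) (hw' : w' = (lpNorm 2 wstar / lpNorm 2 w) • w) :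
    lpNorm q w' ≤ 1 + lpNorm 2 wstar * θ * (d : ℝ) ^ (1 / q.toReal - 1 / 2) ∧
    lpNorm 2 wstar / (1 + lpNorm 2 wstar * θ * (d : ℝ) ^ (1 / q.toReal - 1 / 2))
      ≤ lpNorm 2 w :=
  stmt_15_general q hq1 hq2 w wstar hwq hwsq θ hθ w' hw'
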